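/- Consider the reconstruction problem RP with B ≥ 2 blocks, block widths E_b ≥ 0 with E_1 = P̲, bounds 0 ≤ P̲ ≤ P̄, price p ∈ ℝ, and marginal utilities u ∈ ℝ^B satisfying u_1 > p and u_1 > u_b for every b ≥ 2. Then every maximizer x of Σ_{b=1}^B x_b (u_b − p) over the RP-feasible set satisfies x_1 = E_1 = P̲; i.e., the first load block is always completely filled at the optimum, so the lower bound is enforced through E_1 and u_1. -/
import Mathlib

lemma sum_update_mul {B : ℕ} (f g : Fin B → ℝ) (i : Fin B) (v : ℝ) :
    ∑ b, Function.update f i v b * g b = ∑ b, f b * g b + (v - f i) * g i := by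
  have h : ∀ b, Function.update f i v b * g b
      = f b * g b + (if b = i then (v - f i) * g i else 0) := by
    intro b
    by_cases hb : b = i
    · subst hb; simp [Function.update_self]; ring
    · simp [Function.update_of_ne hb, hb]
  simp_rw [h, Finset.sum_add_distrib, Finset.sum_ite_eq' Finset.univ,
    Finset.mem_univ, if_true]

lemma sum_update' {B : ℕ} (f : Fin B → ℝ) (i : Fin B) (v : ℝ) :
    ∑ b, Function.update f i v b = ∑ b, f b + (v - f i) := by
  have := sum_update_mul f (fun _ => 1) i v
  simpa using this

/-- In RP with B ≥ 2 blocks, E_b ≥ 0, E_1 = P̲, 0 ≤ P̲ ≤ P̄, u_1 > p and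
u_1 > u_b for all b ≥ 2, every maximizer x of Σ_b x_b (u_b - p) over the
RP-feasible set fills the first block completely: x_1 = E_1 = P̲. -/
theorem first_block_filled (B : ℕ) (hB : 2 ≤ B) (p Pl Pu : ℝ) (u E : Fin B → ℝ)
    (hE : ∀ b, 0 ≤ E b) (hE0 : E ⟨0, by omega⟩ = Pl)
    (h0 : 0 ≤ Pl) (hP : Pl ≤ Pu)
    (hu1 : u ⟨0, by omega⟩ > p)
    (hub : ∀ b : Fin B, b ≠ ⟨0, by omega⟩ → u ⟨0, by omega⟩ > u b)
    (x : Fin B → ℝ)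
    (hx1 : Pl ≤ ∑ b, x b) (hx2 : ∑ b, x b ≤ Pu)
    (hx3 : ∀ b, 0 ≤ x b) (hx4 : ∀ b, x b ≤ E b)
    (hmax : ∀ y : Fin B → ℝ, Pl ≤ ∑ b, y b → ∑ b, y b ≤ Pu →
      (∀ b, 0 ≤ y b) → (∀ b, y b ≤ E b) →
      ∑ b, y b * (u b - p) ≤ ∑ b, x b * (u b - p)) :
    x ⟨0, by omega⟩ = E ⟨0, by omega⟩ ∧ x ⟨0, by omega⟩ = Pl := by
  set i0 : Fin B := ⟨0, by omega⟩ with hi0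
  suffices hkey : x i0 = E i0 by
    exact ⟨hkey, by rw [hkey, hE0]⟩
  by_contra hne
  have hlt : x i0 < E i0 := lt_of_le_of_ne (hx4 i0) hne
  rcases lt_or_eq_of_le hx2 with hsum | hsum
  · -- room to increase total: raise x i0 by ε
    set ε : ℝ := min (E i0 - x i0) (Pu - ∑ b, x b) with hε
    have hεpos : 0 < ε := lt_min (by linarith) (by linarith)
    set y : Fin B → ℝ := Function.update x i0 (x i0 + ε) with hy
    have hsy : ∑ b, y b = ∑ b, x b + ε := by
      rw [hy, sum_update']; ring
    have h1 : Pl ≤ ∑ b, y b := by rw [hsy]; linarith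
    have h2 : ∑ b, y b ≤ Pu := by
      rw [hsy]
      have : ε ≤ Pu - ∑ b, x b := min_le_right _ _
      linarith
    have h3 : ∀ b, 0 ≤ y b := by
      intro b
      by_cases hb : b = i0
      · subst hb; rw [hy, Function.update_self]; have := hx3 i0; linarith
      · rw [hy, Function.update_of_ne hb]; exact hx3 b
    have h4 : ∀ b, y b ≤ E b := by
      intro b
      by_cases hb : b = i0
      · subst hb; rw [hy, Function.update_self]
        have : ε ≤ E i0 - x i0 := min_le_left _ _
        linarith
      · rw [hy, Function.update_of_ne hb]; exact hx4 b
    have hobj : ∑ b, y b * (u b - p) = ∑ b, x b * (u b - p) + ε * (u i0 - p) := by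
      rw [hy, sum_update_mul]; ring
    have := hmax y h1 h2 h3 h4
    rw [hobj] at this
    nlinarith [mul_pos hεpos (by linarith : (0:ℝ) < u i0 - p)]
  · -- total is at the cap: find b ≠ i0 with x b > 0 and shift to i0
    have hsumE : x i0 + ∑ b ∈ Finset.univ.erase i0, x b = ∑ b, x b :=
      Finset.add_sum_erase _ _ (Finset.mem_univ i0)
    have hpos : 0 < ∑ b ∈ Finset.univ.erase i0, x b := by
      have : x i0 < Pl := by rw [← hE0]; exact hlt
      linarith [hsum ▸ hsumE, hP]
    obtain ⟨b, hbmem, hbpos⟩ : ∃ b ∈ Finset.univ.erase i0, 0 < x b := by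
      by_contra h
      push_neg at h
      have : ∑ b ∈ Finset.univ.erase i0, x b ≤ 0 :=
        Finset.sum_nonpos fun c hc => h c hc
      linarith
    have hbne : b ≠ i0 := (Finset.mem_erase.mp hbmem).1
    set ε : ℝ := min (E i0 - x i0) (x b) with hε
    have hεpos : 0 < ε := lt_min (by linarith) hbpos
    set y : Fin B → ℝ := Function.update (Function.update x i0 (x i0 + ε)) b (x b - ε)
      with hy
    have hxb : Function.update x i0 (x i0 + ε) b = x b :=
      Function.update_of_ne hbne _ _
    have hsy : ∑ c, y c = ∑ c, x c := by
      rw [hy, sum_update', hxb, sum_update']; ring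
    have h1 : Pl ≤ ∑ c, y c := by rw [hsy]; exact hx1
    have h2 : ∑ c, y c ≤ Pu := by rw [hsy]; exact hx2
    have hyval : ∀ c, y c = if c = b then x b - ε else if c = i0 then x i0 + ε else x c := by
      intro c
      by_cases hc : c = b
      · subst hc; rw [hy, Function.update_self]; simp
      · by_cases hc0 : c = i0
        · subst hc0
          rw [hy, Function.update_of_ne hc, Function.update_self]
          simp [hc, hbne.symm]
        · rw [hy, Function.update_of_ne hc, Function.update_of_ne hc0]
          simp [hc, hc0]
    have h3 : ∀ c, 0 ≤ y c := by
      intro c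
      rw [hyval]
      by_cases hc : c = b
      · simp only [hc, if_true]
        have : ε ≤ x b := min_le_right _ _
        linarith
      · by_cases hc0 : c = i0
        · rw [if_neg hc, if_pos hc0]
          have := hx3 i0; linarith
        · rw [if_neg hc, if_neg hc0]; exact hx3 c
    have h4 : ∀ c, y c ≤ E c := by
      intro c
      rw [hyval]
      by_cases hc : c = b
      · simp only [hc, if_true]
        have := hx4 b; subst hc; linarith
      · by_cases hc0 : c = i0
        · rw [if_neg hc, if_pos hc0]
          have : ε ≤ E i0 - x i0 := min_le_left _ _
          subst hc0; linarith
        · rw [if_neg hc, if_neg hc0]; exact hx4 c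
    have hobj : ∑ c, y c * (u c - p)
        = ∑ c, x c * (u c - p) + ε * (u i0 - u b) := by
      rw [hy, sum_update_mul, hxb, sum_update_mul]
      ring
    have := hmax y h1 h2 h3 h4
    rw [hobj] at this
    nlinarith [mul_pos hεpos (by linarith [hub b hbne] : (0:ℝ) < u i0 - u b)]
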